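/- arXiv:1710.07130 — 4 statements merged into one kernel-verified Lean document; each statement's English description precedes it below -/
import Mathlib

section
/- Let X and Y be Banach spaces, let h : X → Y be a bounded linear map, and suppose there exists a bounded linear map s : X* → Y* between the dual spaces such that h* ∘ s ∘ h* = h* (where h* : Y* → X* is the adjoint of h). Then h has closed range, and the induced map X/ker(h) → range(h) is a Banach space isomorphism (bounded bijection with bounded inverse). -/
/-!
Let `Z` be the closure of the range of `h`. A functional `ψ` on `Z` extends by Hahn–Banach to some
`φ` on `Y`, and `s (φ ∘ h)` agrees with `φ` on the range of `h` (this is `h* s h* = h*`), hence on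
`Z`; so `‖ψ‖ ≤ ‖s‖ ‖ψ ∘ h‖`, i.e. the adjoint of `h : X → Z` is bounded below. Hahn–Banach
separation then puts every `y ∈ Z` in the closure of the image of a ball of radius proportional
to `‖y‖`, and the iteration from the proof of the open mapping theorem makes `h : X → Z` onto.
Thus the range of `h` is the closed subspace `Z`, and the open mapping theorem turns the induced
bijection `X ⧸ ker h → range h` into an isomorphism.
-/

open NormedSpace

open Metric Set Filter Topology

namespace ContinuousLinearMap

section OpenMapping

variable {𝕜 E F : Type*} [NontriviallyNormedField 𝕜]
  [NormedAddCommGroup E] [NormedSpace 𝕜 E] [CompleteSpace E]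
  [NormedAddCommGroup F] [NormedSpace 𝕜 F]

theorem surjective_of_forall_exists_approx_preimage (T : E →L[𝕜] F) {C : ℝ} (hC : 0 ≤ C)
    (hT : ∀ y, ∃ x, ‖x‖ ≤ C * ‖y‖ ∧ ‖y - T x‖ ≤ 1 / 2 * ‖y‖) :
    Function.Surjective T := by
  choose g hg_norm hg_dist using hT
  intro y
  set r : F → F := fun z => z - T (g z)
  have hr : ∀ n : ℕ, ‖r^[n] y‖ ≤ (1 / 2) ^ n * ‖y‖ := by
    intro n
    induction n with
    | zero => simp
    | succ n ih =>
      rw [Function.iterate_succ_apply', pow_succ', mul_assoc]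
      exact (hg_dist _).trans (by gcongr)
  set u : ℕ → E := fun n => g (r^[n] y)
  have hu : ∀ n, ‖u n‖ ≤ C * ‖y‖ * (1 / 2) ^ n := fun n =>
    calc ‖u n‖ ≤ C * ‖r^[n] y‖ := hg_norm _
      _ ≤ C * ((1 / 2) ^ n * ‖y‖) := by gcongr; exact hr n
      _ = C * ‖y‖ * (1 / 2) ^ n := by ring
  have hsum : Summable u := Summable.of_norm_bounded (summable_geometric_two.mul_left _) hu
  have hpartial : ∀ N, T (∑ n ∈ Finset.range N, u n) = y - r^[N] y := fun N => by
    have hstep : ∀ n, T (u n) = r^[n] y - r^[n + 1] y := fun n => by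
      rw [Function.iterate_succ_apply', sub_sub_cancel]
    simp only [map_sum, hstep, Finset.sum_range_sub', Function.iterate_zero_apply]
  have hr_lim : Tendsto (fun N => r^[N] y) atTop (𝓝 0) :=
    squeeze_zero_norm hr (by simpa using (tendsto_pow_atTop_nhds_zero_of_lt_one
      (by norm_num : (0 : ℝ) ≤ 1 / 2) (by norm_num)).mul_const ‖y‖)
  refine ⟨∑' n, u n, tendsto_nhds_unique
    ((T.continuous.tendsto _).comp hsum.hasSum.tendsto_sum_nat) ?_⟩
  simpa [Function.comp_def, hpartial] using (tendsto_const_nhds (x := y)).sub hr_lim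

theorem surjective_of_forall_mem_closure_image_closedBall (T : E →L[𝕜] F) {C : ℝ} (hC : 0 ≤ C)
    (hT : ∀ y, y ∈ closure (T '' closedBall 0 (C * ‖y‖))) :
    Function.Surjective T := by
  refine T.surjective_of_forall_exists_approx_preimage hC fun y => ?_
  rcases eq_or_ne y 0 with rfl | hy
  · exact ⟨0, by simp⟩
  obtain ⟨_, ⟨x, hx, rfl⟩, hdist⟩ :=
    Metric.mem_closure_iff.mp (hT y) (1 / 2 * ‖y‖) (by positivity)
  exact ⟨x, mem_closedBall_zero_iff.mp hx, (dist_eq_norm _ _).ge.trans hdist.le⟩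

theorem isStrictMap_of_isClosed_range [CompleteSpace F] (f : E →L[𝕜] F)
    (hf : IsClosed (LinearMap.range (f : E →ₗ[𝕜] F) : Set F)) :
    IsStrictMap (f : E →ₗ[𝕜] F) := by
  have : CompleteSpace (LinearMap.range (f : E →ₗ[𝕜] F)) := hf.completeSpace_coe
  have hsurj : Function.Surjective f.rangeRestrict := LinearMap.surjective_rangeRestrict _
  rw [LinearMap.isStrictMap_iff_isOpenQuotientMap_rangeRestrict]
  exact ⟨hsurj, f.rangeRestrict.continuous, f.rangeRestrict.isOpenMap hsurj⟩

end OpenMapping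

section Separation

variable {E F : Type*} [NormedAddCommGroup E] [NormedSpace ℝ E]
  [NormedAddCommGroup F] [NormedSpace ℝ F]

-- A functional separating `y` from the symmetric convex set `closure (T '' closedBall 0 r)` has
-- `‖ψ ∘ T‖ ≤ u / r` but `ψ y > u`, against the lower bound on `T*`.
theorem mem_closure_image_closedBall_of_norm_le_mul_norm_comp (T : E →L[ℝ] F) {C : ℝ}
    (hC : 0 < C) (hT : ∀ ψ : StrongDual ℝ F, ‖ψ‖ ≤ C * ‖ψ.comp T‖) (y : F) :
    y ∈ closure (T '' closedBall 0 (C * ‖y‖)) := by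
  rcases eq_or_ne y 0 with rfl | hy
  · exact subset_closure ⟨0, by simp⟩
  set r := C * ‖y‖
  have hr : 0 < r := by positivity
  by_contra hyD
  have hconv : Convex ℝ (closure (T '' closedBall 0 r)) :=
    ((convex_closedBall 0 r).linear_image T.toLinearMap).closure
  obtain ⟨ψ, u, hψ, hψy⟩ := geometric_hahn_banach_closed_point hconv isClosed_closure hyD
  have hbound : ∀ x ∈ closedBall (0 : E) r, ‖ψ.comp T x‖ ≤ u := by
    intro x hx
    have hpos := hψ _ (subset_closure (mem_image_of_mem T hx))
    have hneg := hψ _ (subset_closure (mem_image_of_mem T (x := -x) (by simpa using hx)))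
    rw [map_neg, map_neg] at hneg
    rw [comp_apply, Real.norm_eq_abs, abs_le]
    constructor <;> linarith
  have hψT := opNorm_bound_of_ball_bound hr u (ψ.comp T) hbound
  have hψy_le : ψ y ≤ u := calc
    ψ y ≤ ‖ψ‖ * ‖y‖ := (le_abs_self _).trans (ψ.le_opNorm y)
    _ ≤ C * ‖ψ.comp T‖ * ‖y‖ := by gcongr; exact hT ψ
    _ ≤ C * (u / r) * ‖y‖ := by gcongr
    _ = u := by field_simp [r]; ring
  linarith

end Separation

section GeneralizedInverse

variable {X Y : Type*} [NormedAddCommGroup X] [NormedSpace ℝ X]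
  [NormedAddCommGroup Y] [NormedSpace ℝ Y] {h : X →L[ℝ] Y}
  {s : StrongDual ℝ X →L[ℝ] StrongDual ℝ Y}

theorem eqOn_closure_range_of_dual_comp_eq
    (hs : ∀ φ : StrongDual ℝ Y, (s (φ.comp h)).comp h = φ.comp h) (φ : StrongDual ℝ Y) :
    EqOn (s (φ.comp h)) φ (closure (range h)) :=
  EqOn.closure (by rintro _ ⟨x, rfl⟩; exact congr($(hs φ) x)) (s _).continuous φ.continuous

theorem norm_le_mul_norm_comp_codRestrict
    (hs : ∀ φ : StrongDual ℝ Y, (s (φ.comp h)).comp h = φ.comp h) {Z : Submodule ℝ Y}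
    (hZ : (Z : Set Y) ⊆ closure (range h)) (hmem : ∀ x, h x ∈ Z) (ψ : StrongDual ℝ Z) :
    ‖ψ‖ ≤ ‖s‖ * ‖ψ.comp (h.codRestrict Z hmem)‖ := by
  obtain ⟨φ, hφ, -⟩ := exists_extension_norm_eq Z ψ
  have hφh : φ.comp h = ψ.comp (h.codRestrict Z hmem) := by
    ext x
    exact hφ ⟨h x, hmem x⟩
  calc ‖ψ‖ ≤ ‖s (φ.comp h)‖ := ψ.opNorm_le_bound (norm_nonneg _) fun z => by
        rw [← hφ z, ← eqOn_closure_range_of_dual_comp_eq hs φ (hZ z.2)]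
        exact (s (φ.comp h)).le_opNorm z
    _ ≤ ‖s‖ * ‖φ.comp h‖ := s.le_opNorm _
    _ = ‖s‖ * ‖ψ.comp (h.codRestrict Z hmem)‖ := by rw [hφh]

end GeneralizedInverse

end ContinuousLinearMap

/-- If `h : X → Y` is a bounded linear map of Banach spaces and there is a bounded linear
map `s : X* → Y*` with `h* ∘ s ∘ h* = h*`, then `h` has closed range and the induced map
`X/ker h → range h` is a Banach space isomorphism. -/
theorem stmt_0
    {X Y : Type*} [NormedAddCommGroup X] [NormedSpace ℝ X] [CompleteSpace X]
    [NormedAddCommGroup Y] [NormedSpace ℝ Y] [CompleteSpace Y]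
    (h : X →L[ℝ] Y)
    (hstar : StrongDual ℝ Y →L[ℝ] StrongDual ℝ X)
    (hstar_def : ∀ (φ : StrongDual ℝ Y) (x : X), hstar φ x = φ (h x))
    (s : StrongDual ℝ X →L[ℝ] StrongDual ℝ Y)
    (hs : ∀ φ : StrongDual ℝ Y, hstar (s (hstar φ)) = hstar φ) :
    IsClosed (LinearMap.range (h : X →ₗ[ℝ] Y) : Set Y) ∧
      ∃ e : (X ⧸ LinearMap.ker (h : X →ₗ[ℝ] Y)) ≃L[ℝ] LinearMap.range (h : X →ₗ[ℝ] Y),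
        ∀ x : X, (e (Submodule.Quotient.mk x) : Y) = h x := by
  have hstar_eq : ∀ φ, hstar φ = φ.comp h := fun φ => ContinuousLinearMap.ext (hstar_def φ)
  have hs_comp : ∀ φ : StrongDual ℝ Y, (s (φ.comp h)).comp h = φ.comp h := fun φ => by
    simpa only [hstar_eq] using hs φ
  set Z := (LinearMap.range (h : X →ₗ[ℝ] Y)).topologicalClosure
  have hmem : ∀ x, h x ∈ Z := fun x => Submodule.le_topologicalClosure _ ⟨x, rfl⟩
  set T := h.codRestrict Z hmem
  have hdual : ∀ ψ : StrongDual ℝ Z, ‖ψ‖ ≤ (‖s‖ + 1) * ‖ψ.comp T‖ := fun ψ =>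
    (ContinuousLinearMap.norm_le_mul_norm_comp_codRestrict hs_comp subset_rfl hmem ψ).trans
      (by gcongr; linarith)
  have hsurj : Function.Surjective T := T.surjective_of_forall_mem_closure_image_closedBall
    (by positivity) (T.mem_closure_image_closedBall_of_norm_le_mul_norm_comp (by positivity) hdual)
  have hrange : (LinearMap.range (h : X →ₗ[ℝ] Y) : Set Y) = Z := by
    refine Set.Subset.antisymm (Submodule.le_topologicalClosure _) fun y hy => ?_
    obtain ⟨x, hx⟩ := hsurj ⟨y, hy⟩
    exact ⟨x, congr_arg Subtype.val hx⟩
  have hclosed : IsClosed (LinearMap.range (h : X →ₗ[ℝ] Y) : Set Y) :=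
    hrange ▸ Submodule.isClosed_topologicalClosure _
  exact ⟨hclosed, .quotKerEquivRange (h.isStrictMap_of_isClosed_range hclosed), fun _ => rfl⟩
end

section
/- Let (L, R) be an adjoint pair of bimodules over rings A and B with unit η and counit ε. Define a multiplication on K = L ⊗_B R by (l₁ ⊗ r₁)·(l₂ ⊗ r₂) = l₁ · ε(r₁ ⊗ l₂) ⊗ r₂. Then this multiplication is associative, and the map η : A → K is a ring homomorphism (with respect to this multiplication). -/
open TensorProduct

/-!
On pure tensors the product is `(l₁ ⊗ r₁)(l₂ ⊗ r₂) = ε(r₁ ⊗ l₂) • (l₁ ⊗ r₂)`, so both bracketings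
of a triple product equal `ε(r₁ ⊗ l₂) ε(r₂ ⊗ l₃) • (l₁ ⊗ r₃)`. Multiplying by `η 1` on the left
(right) contracts `η 1` against the `L` (`R`) factor with `ε`, which is the identity by the second
(first) triangle identity; multiplicativity of `η` then follows from `η a = a • η 1`.
-/

namespace AdjointBimodule

variable {k L R : Type*} [CommSemiring k]
  [AddCommMonoid L] [Module k L] [AddCommMonoid R] [Module k R]
  {ε : R ⊗[k] L →ₗ[k] k} {μ : L ⊗[k] R →ₗ[k] L ⊗[k] R →ₗ[k] L ⊗[k] R}

section
variable (hμ : ∀ (l₁ l₂ : L) (r₁ r₂ : R),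
  μ (l₁ ⊗ₜ[k] r₁) (l₂ ⊗ₜ[k] r₂) = ε (r₁ ⊗ₜ[k] l₂) • (l₁ ⊗ₜ[k] r₂))
include hμ

theorem mul_assoc_tmul (l₁ l₂ l₃ : L) (r₁ r₂ r₃ : R) :
    μ (μ (l₁ ⊗ₜ r₁) (l₂ ⊗ₜ r₂)) (l₃ ⊗ₜ r₃) = μ (l₁ ⊗ₜ r₁) (μ (l₂ ⊗ₜ r₂) (l₃ ⊗ₜ r₃)) := by
  simp only [hμ, map_smul, LinearMap.smul_apply]
  exact smul_comm _ _ _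

theorem mul_assoc (x y z : L ⊗[k] R) : μ (μ x y) z = μ x (μ y z) := by
  induction x using TensorProduct.induction_on with
  | zero => simp
  | add x₁ x₂ h₁ h₂ => simp only [map_add, LinearMap.add_apply, h₁, h₂]
  | tmul l₁ r₁ =>
    induction y using TensorProduct.induction_on with
    | zero => simp
    | add y₁ y₂ h₁ h₂ => simp only [map_add, LinearMap.add_apply, h₁, h₂]
    | tmul l₂ r₂ =>
      induction z using TensorProduct.induction_on with
      | zero => simp
      | add z₁ z₂ h₁ h₂ => simp only [map_add, h₁, h₂]
      | tmul l₃ r₃ => exact mul_assoc_tmul hμ l₁ l₂ l₃ r₁ r₂ r₃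

theorem mul_tmul_eq_contract (t : L ⊗[k] R) (l : L) (r : R) :
    μ t (l ⊗ₜ r) =
      TensorProduct.rid k L (LinearMap.lTensor L ε (TensorProduct.assoc k L R L (t ⊗ₜ l))) ⊗ₜ r := by
  induction t using TensorProduct.induction_on with
  | zero => simp
  | tmul l' r' => simp [hμ, TensorProduct.smul_tmul']
  | add a b ha hb => simp only [LinearMap.add_apply, TensorProduct.add_tmul, map_add, ha, hb]

theorem tmul_mul_eq_contract (l : L) (r : R) (t : L ⊗[k] R) :
    μ (l ⊗ₜ r) t =
      l ⊗ₜ TensorProduct.lid k R (LinearMap.rTensor R ε ((TensorProduct.assoc k R L R).symm (r ⊗ₜ t))) := by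
  induction t using TensorProduct.induction_on with
  | zero => simp
  | tmul l' r' => simp [hμ, TensorProduct.tmul_smul]
  | add a b ha hb => simp only [TensorProduct.tmul_add, map_add, ha, hb]

theorem one_mul {η : k →ₗ[k] L ⊗[k] R}
    (tri₂ : ∀ l : L,
      (TensorProduct.rid k L)
        ((LinearMap.lTensor L ε)
          ((TensorProduct.assoc k L R L)
            ((LinearMap.rTensor L η) ((TensorProduct.lid k L).symm l)))) = l)
    (x : L ⊗[k] R) : μ (η 1) x = x := by
  suffices μ (η 1) = LinearMap.id from LinearMap.congr_fun this x
  refine TensorProduct.ext' fun l r => ?_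
  have h := tri₂ l
  simp only [TensorProduct.lid_symm_apply, LinearMap.rTensor_tmul] at h
  rw [mul_tmul_eq_contract hμ, h, LinearMap.id_apply]

theorem mul_one {η : k →ₗ[k] L ⊗[k] R}
    (tri₁ : ∀ r : R,
      (TensorProduct.lid k R)
        ((LinearMap.rTensor R ε)
          ((TensorProduct.assoc k R L R).symm
            ((LinearMap.lTensor R η) ((TensorProduct.rid k R).symm r)))) = r)
    (x : L ⊗[k] R) : μ x (η 1) = x := by
  suffices μ.flip (η 1) = LinearMap.id from LinearMap.congr_fun this x
  refine TensorProduct.ext' fun l r => ?_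
  have h := tri₁ r
  simp only [TensorProduct.rid_symm_apply, LinearMap.lTensor_tmul] at h
  rw [LinearMap.flip_apply, tmul_mul_eq_contract hμ, h, LinearMap.id_apply]

end

theorem map_mul_of_one_mul {η : k →ₗ[k] L ⊗[k] R} (h_one_mul : ∀ x, μ (η 1) x = x) (a b : k) :
    μ (η a) (η b) = η (a * b) := by
  have smul_one : ∀ c : k, η c = c • η 1 := fun c => by rw [← map_smul, smul_eq_mul, _root_.mul_one]
  rw [smul_one a, smul_one b, smul_one (a * b), map_smul, map_smul, LinearMap.smul_apply, h_one_mul,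
    smul_smul, mul_comm]

end AdjointBimodule

open AdjointBimodule in
/-- For an adjoint pair of bimodules (here over a commutative ring) with unit `η` and
counit `ε`, the multiplication on `K = L ⊗ R` defined by
`(l₁ ⊗ r₁)·(l₂ ⊗ r₂) = ε(r₁ ⊗ l₂) • (l₁ ⊗ r₂)` is associative, and `η` is a ring
homomorphism onto it (it is multiplicative, and sends `1` to a two-sided unit). -/
theorem stmt_5 {k L R : Type*} [CommRing k]
    [AddCommGroup L] [Module k L] [AddCommGroup R] [Module k R]
    (η : k →ₗ[k] L ⊗[k] R)
    (ε : R ⊗[k] L →ₗ[k] k)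
    (tri₁ : ∀ r : R,
      (TensorProduct.lid k R)
        ((LinearMap.rTensor R ε)
          ((TensorProduct.assoc k R L R).symm
            ((LinearMap.lTensor R η) ((TensorProduct.rid k R).symm r)))) = r)
    (tri₂ : ∀ l : L,
      (TensorProduct.rid k L)
        ((LinearMap.lTensor L ε)
          ((TensorProduct.assoc k L R L)
            ((LinearMap.rTensor L η) ((TensorProduct.lid k L).symm l)))) = l)
    (μ : L ⊗[k] R →ₗ[k] L ⊗[k] R →ₗ[k] L ⊗[k] R)
    (hμ : ∀ (l₁ l₂ : L) (r₁ r₂ : R),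
      μ (l₁ ⊗ₜ[k] r₁) (l₂ ⊗ₜ[k] r₂) = ε (r₁ ⊗ₜ[k] l₂) • (l₁ ⊗ₜ[k] r₂)) :
    (∀ x y z : L ⊗[k] R, μ (μ x y) z = μ x (μ y z)) ∧
    (∀ a b : k, μ (η a) (η b) = η (a * b)) ∧
    (∀ x : L ⊗[k] R, μ (η 1) x = x ∧ μ x (η 1) = x) :=
  ⟨mul_assoc hμ, map_mul_of_one_mul (one_mul hμ tri₂),
    fun x => ⟨one_mul hμ tri₂ x, mul_one hμ tri₁ x⟩⟩
end

section
/- Let A → B be a faithfully flat ring homomorphism of commutative rings (or a ring map with B faithfully flat as a left A-module). Then for every right A-module X, the sequence 0 → X → X ⊗_A B ⇉ X ⊗_A B ⊗_A B is exact, where the first map is x ↦ x ⊗ 1 and the two parallel maps are x ⊗ b ↦ x ⊗ 1 ⊗ b and x ⊗ b ↦ x ⊗ b ⊗ 1. In particular x ↦ x ⊗ 1 is injective with image equal to the equalizer of the two maps. -/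
/-!
After base change along `B` the sequence `X → X ⊗ B ⇉ X ⊗ B ⊗ B` acquires a contracting
homotopy, given by multiplying the last two tensor factors, so it is exact; faithful flatness
of `B` then reflects this exactness back to the original sequence.
-/

open TensorProduct

namespace LinearMap

variable {R M N P : Type*} [Semiring R] [AddCommMonoid M] [AddCommMonoid N] [AddCommMonoid P]
  [Module R M] [Module R N] [Module R P]

lemma exact_of_homotopy {f : M →ₗ[R] N} {g : N →ₗ[R] P} (r : N →ₗ[R] M) (s : P →ₗ[R] N)
    (hgf : g ∘ₗ f = 0) (h : f ∘ₗ r = id + s ∘ₗ g) : Function.Exact f g := by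
  refine exact_of_comp_of_mem_range hgf fun y hy ↦ ⟨r y, ?_⟩
  simpa [hy] using congr($h y)

end LinearMap

namespace Amitsur

variable (A B : Type*) [CommRing A] [Ring B] [Algebra A B]
  (X : Type*) [AddCommGroup X] [Module A X]

noncomputable def unit : X →ₗ[A] X ⊗[A] B :=
  (TensorProduct.mk A X B).flip 1

noncomputable def diff : X ⊗[A] B →ₗ[A] (X ⊗[A] B) ⊗[A] B :=
  (unit A B X).rTensor B - unit A B (X ⊗[A] B)

noncomputable def mulLast : (X ⊗[A] B) ⊗[A] B →ₗ[A] X ⊗[A] B :=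
  (LinearMap.mul' A B).lTensor X ∘ₗ (TensorProduct.assoc A X B B).toLinearMap

variable {A B X}

@[simp] lemma unit_apply (x : X) : unit A B X x = x ⊗ₜ 1 := rfl

@[simp] lemma diff_tmul (x : X) (b : B) :
    diff A B X (x ⊗ₜ b) = (x ⊗ₜ 1) ⊗ₜ b - (x ⊗ₜ b) ⊗ₜ 1 := rfl

@[simp] lemma mulLast_tmul (x : X) (b c : B) :
    mulLast A B X ((x ⊗ₜ b) ⊗ₜ c) = x ⊗ₜ (b * c) := rfl

variable (A B X)

lemma diff_comp_unit : diff A B X ∘ₗ unit A B X = 0 := by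
  ext x
  simp

lemma mulLast_comp_rTensor_unit :
    mulLast A B X ∘ₗ (unit A B X).rTensor B = LinearMap.id := by
  ext x b
  simp

lemma rTensor_unit_comp_mulLast :
    (unit A B X).rTensor B ∘ₗ mulLast A B X =
      LinearMap.id + mulLast A B (X ⊗[A] B) ∘ₗ (diff A B X).rTensor B := by
  ext x b c
  simp [sub_tmul]

lemma rTensor_unit_injective : Function.Injective ((unit A B X).rTensor B) :=
  Function.LeftInverse.injective (g := mulLast A B X)
    (LinearMap.congr_fun (mulLast_comp_rTensor_unit A B X))

lemma exact_rTensor_unit_rTensor_diff :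
    Function.Exact ((unit A B X).rTensor B) ((diff A B X).rTensor B) := by
  refine LinearMap.exact_of_homotopy (mulLast A B X) (mulLast A B (X ⊗[A] B)) ?_
    (rTensor_unit_comp_mulLast A B X)
  rw [← LinearMap.rTensor_comp, diff_comp_unit, LinearMap.rTensor_zero]

variable [Module.FaithfullyFlat A B]

lemma unit_injective : Function.Injective (unit A B X) := by
  rw [← LinearMap.exact_zero_iff_injective PUnit]
  apply Module.FaithfullyFlat.rTensor_reflects_exact A B
  rw [LinearMap.rTensor_zero, LinearMap.exact_zero_iff_injective]
  exact rTensor_unit_injective A B X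

lemma exact_unit_diff : Function.Exact (unit A B X) (diff A B X) :=
  Module.FaithfullyFlat.rTensor_reflects_exact A B _ _ (exact_rTensor_unit_rTensor_diff A B X)

end Amitsur

/-- Faithfully flat descent in low degrees: if `B` is a faithfully flat `A`-algebra and
`X` an `A`-module, then `x ↦ x ⊗ 1` is injective, and its range is the equalizer of the
two maps `x ⊗ b ↦ x ⊗ 1 ⊗ b` and `x ⊗ b ↦ x ⊗ b ⊗ 1`, i.e. the kernel of their
difference. -/
theorem stmt_13 {A B X : Type*} [CommRing A] [CommRing B] [Algebra A B]
    [Module.FaithfullyFlat A B]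
    [AddCommGroup X] [Module A X] :
    Function.Injective ((TensorProduct.mk A X B).flip 1) ∧
    LinearMap.range ((TensorProduct.mk A X B).flip 1) =
      LinearMap.ker
        (LinearMap.rTensor B ((TensorProduct.mk A X B).flip 1) -
          (TensorProduct.mk A (X ⊗[A] B) B).flip 1) :=
  ⟨Amitsur.unit_injective A B X, (Amitsur.exact_unit_diff A B X).linearMap_ker_eq.symm⟩
end

section
/- Let A and B be C*-algebras, F a right Hilbert C*-module over B on which A acts via a *-homomorphism into the adjointable operators, and let X be a right Hilbert C*-module over A. Then the formula ⟨x₁ ⊗ f₁ | x₂ ⊗ f₂⟩ = ⟨f₁ | ⟨x₁|x₂⟩·f₂⟩ defines a B-valued inner product on the algebraic tensor product X ⊗_A F which is positive semidefinite and satisfies ⟨ξ | ζ·b⟩ = ⟨ξ|ζ⟩·b and ⟨ξ|ζ⟩* = ⟨ζ|ξ⟩. -/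
/-!
Positivity is proved by induction on the number of elementary tensors, splitting off one of them
by a regularised Schur complement. Write `a = ⟨x₀|x₀⟩ = star σ * σ`, `bⱼ = ⟨x₀|xⱼ⟩`, and for `ε > 0`
let `cⱼ = (a + ε)⁻¹ bⱼ`, which lies in `A` although `a + ε` is only invertible in the
unitization. For `x'ⱼ = xⱼ - x₀ cⱼ`, `w = ρ(σ) f₀ + Σ ρ(σ cⱼ) fⱼ` and `v = Σ ρ(cⱼ) fⱼ` one has
`S + ε ⟨f₀|f₀⟩ = S' + ⟨w|w⟩ + ε (⟨v + f₀|v + f₀⟩ + ⟨v|v⟩)`, where `S` and `S'` are the sums for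
`(x, f)` and `(x', f)`. By induction `S' ≥ 0`, so `S + ε ⟨f₀|f₀⟩ ≥ 0` for every `ε > 0`, and
`S ≥ 0` because the positive cone of `B` is closed.
-/

open scoped RightActions

/-- The Hilbert C*-module class as it stood in Mathlib of December 2024 (right `Aᵐᵒᵖ`-action,
inner product `A`-linear on the right: `⟪x, y <• a⟫ = ⟪x, y⟫ * a`). Mathlib's `CStarModule`
now uses a left action, so the old notion is restated here. -/
class RightCStarModule (A E : Type*) [NonUnitalSemiring A] [StarRing A] [Module ℂ A]
    [AddCommGroup E] [Module ℂ E] [PartialOrder A] [SMul Aᵐᵒᵖ E] [Norm A] [Norm E]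
    extends Inner A E where
  inner_add_right {x} {y} {z} : inner x (y + z) = inner x y + inner x z
  inner_self_nonneg {x} : 0 ≤ inner x x
  inner_self {x} : inner x x = 0 ↔ x = 0
  inner_op_smul_right {a : A} {x y : E} : inner x (y <• a) = inner x y * a
  inner_smul_right_complex {z : ℂ} {x} {y} : inner x (z • y) = z • inner x y
  star_inner x y : star (inner x y) = inner y x
  norm_eq_sqrt_norm_inner_self x : ‖x‖ = Real.sqrt ‖inner x x‖

namespace RightCStarModule

variable {A E : Type*} [NonUnitalRing A] [StarRing A] [Module ℂ A] [PartialOrder A] [Norm A]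
  [AddCommGroup E] [Module ℂ E] [SMul Aᵐᵒᵖ E] [Norm E] [RightCStarModule A E]

variable (A) in
def innerAddMonoidHom (x : E) : E →+ A := AddMonoidHom.mk' (inner A x) fun _ _ => inner_add_right

lemma inner_sub_right {x y z : E} : inner A x (y - z) = inner A x y - inner A x z :=
  map_sub (innerAddMonoidHom A x) y z

lemma inner_sum_right {ι : Type*} (s : Finset ι) (x : E) (y : ι → E) :
    inner A x (∑ i ∈ s, y i) = ∑ i ∈ s, inner A x (y i) :=
  map_sum (innerAddMonoidHom A x) y s

lemma inner_add_left {x y z : E} : inner A (x + y) z = inner A x z + inner A y z := by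
  rw [← star_inner z, inner_add_right, star_add, star_inner, star_inner]

lemma inner_sub_left {x y z : E} : inner A (x - y) z = inner A x z - inner A y z := by
  rw [← star_inner z, inner_sub_right, star_sub, star_inner, star_inner]

lemma inner_sum_left {ι : Type*} (s : Finset ι) (x : ι → E) (y : E) :
    inner A (∑ i ∈ s, x i) y = ∑ i ∈ s, inner A (x i) y := by
  rw [← star_inner y, inner_sum_right, star_sum]
  simp only [star_inner]

lemma inner_op_smul_left {a : A} {x y : E} : inner A (x <• a) y = star a * inner A x y := by
  rw [← star_inner y, inner_op_smul_right, star_mul, star_inner]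

lemma inner_sub_op_smul_sub_op_smul (x y z : E) (c d : A) :
    inner A (x - z <• c) (y - z <• d) =
      inner A x y - star c * inner A z y - inner A x z * d + star c * inner A z z * d := by
  simp only [inner_sub_left, inner_sub_right, inner_op_smul_left, inner_op_smul_right, sub_mul,
    mul_assoc]
  abel

end RightCStarModule

theorem exists_mul_add_smul_eq {A : Type*} [NonUnitalCStarAlgebra A] [PartialOrder A]
    [StarOrderedRing A] {a : A} (ha : 0 ≤ a) {ε : ℝ} (hε : 0 < ε) (b : A) :
    ∃ c : A, a * c + ε • c = b := by
  set u : Unitization ℂ A := algebraMap ℝ (Unitization ℂ A) ε + a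
  have hu : IsUnit u :=
    ((isStrictlyPositive_algebraMap hε).add_nonneg (Unitization.inr_nonneg_iff.mpr ha)).isUnit
  set v : Unitization ℂ A := ↑hu.unit⁻¹ * (b : Unitization ℂ A)
  have hv : ((v.snd : A) : Unitization ℂ A) = v := by
    ext <;> simp [v]
  refine ⟨v.snd, Unitization.inr_injective (R := ℂ) ?_⟩
  have : u * v = b := by simp [v, ← mul_assoc]
  rw [← this, Unitization.inr_add, Unitization.inr_mul, Unitization.inr_smul, hv]
  simp [u, add_mul, Algebra.smul_def, add_comm]

lemma nonneg_of_forall_nonneg_add_smul {B : Type*} [NonUnitalCStarAlgebra B] [PartialOrder B]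
    [StarOrderedRing B] {s p : B} (h : ∀ ε : ℝ, 0 < ε → 0 ≤ s + ε • p) : 0 ≤ s := by
  have hlim : Filter.Tendsto (fun ε : ℝ => s + ε • p) (nhdsWithin 0 (Set.Ioi 0)) (nhds s) := by
    have : Continuous (fun ε : ℝ => s + ε • p) := by fun_prop
    simpa using (this.tendsto 0).mono_left nhdsWithin_le_nhds
  exact ge_of_tendsto hlim (eventually_nhdsWithin_of_forall h)

namespace RightCStarModule

section Representation

variable {A B F : Type*} [NonUnitalCStarAlgebra A]
  [NonUnitalCStarAlgebra B] [PartialOrder B]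
  [AddCommGroup F] [Module ℂ F] [SMul Bᵐᵒᵖ F] [Norm F] [RightCStarModule B F]
  (π : A →ₙₐ[ℂ] Module.End ℂ F)

lemma inner_map_add (z z' : A) (g h : F) :
    inner B g (π (z + z') h) = inner B g (π z h) + inner B g (π z' h) := by
  rw [map_add, LinearMap.add_apply, inner_add_right]

lemma inner_map_smul (ε : ℝ) (z : A) (g h : F) :
    inner B g (π (ε • z) h) = ε • inner B g (π z h) := by
  rw [← Complex.coe_smul, map_smul, LinearMap.smul_apply, inner_smul_right_complex,
    Complex.coe_smul]

variable (hπ : ∀ (a : A) (f g : F), inner B (π a f) g = inner B f (π (star a) g))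
include hπ

lemma inner_map_map (s t : A) (u v : F) :
    inner B (π s u) (π t v) = inner B u (π (star s * t) v) := by
  rw [hπ, map_mul, Module.End.mul_apply]

end Representation

section GramSum

variable {A B X F : Type*} [NonUnitalCStarAlgebra A] [PartialOrder A]
  [NonUnitalCStarAlgebra B] [PartialOrder B]
  [AddCommGroup X] [Module ℂ X] [SMul Aᵐᵒᵖ X] [Norm X] [RightCStarModule A X]
  [AddCommGroup F] [Module ℂ F] [SMul Bᵐᵒᵖ F] [Norm F] [RightCStarModule B F]
  (π : A →ₙₐ[ℂ] Module.End ℂ F) {ι : Type*}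

variable (B) in
/-- `⟨ξ|ξ⟩` for `ξ = Σ_{i ∈ s} x i ⊗ f i` in the interior tensor product. -/
def gramSum (s : Finset ι) (x : ι → X) (f : ι → F) : B :=
  ∑ i ∈ s, ∑ j ∈ s, inner B (f i) (π (inner A (x i) (x j)) (f j))

lemma gramSum_insert [DecidableEq ι] {s : Finset ι} {k : ι} (hk : k ∉ s) (x : ι → X)
    (f : ι → F) :
    gramSum B π (insert k s) x f =
      inner B (f k) (π (inner A (x k) (x k)) (f k))
        + ∑ j ∈ s, inner B (f k) (π (inner A (x k) (x j)) (f j))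
        + ∑ i ∈ s, inner B (f i) (π (inner A (x i) (x k)) (f k))
        + gramSum B π s x f := by
  simp only [gramSum, Finset.sum_insert hk, Finset.sum_add_distrib]
  abel

variable (hπ : ∀ (a : A) (f g : F), inner B (π a f) g = inner B f (π (star a) g))
include hπ

theorem gramSum_insert_add_smul_eq [DecidableEq ι] {s : Finset ι} {k : ι} (hk : k ∉ s)
    (x : ι → X) (f : ι → F) {σ : A} (hσ : star σ * σ = inner A (x k) (x k)) {ε : ℝ}
    {c : ι → A} (hc : ∀ j, inner A (x k) (x k) * c j + ε • c j = inner A (x k) (x j)) :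
    gramSum B π (insert k s) x f + ε • inner B (f k) (f k) =
      gramSum B π s (fun i => x i - x k <• c i) f
        + inner B (π σ (f k) + ∑ j ∈ s, π (σ * c j) (f j))
            (π σ (f k) + ∑ j ∈ s, π (σ * c j) (f j))
        + ε • (inner B (∑ j ∈ s, π (c j) (f j) + f k) (∑ j ∈ s, π (c j) (f j) + f k)
          + inner B (∑ j ∈ s, π (c j) (f j)) (∑ j ∈ s, π (c j) (f j))) := by
  rw [← hσ] at hc
  have hrow : ∀ j, inner A (x k) (x j) = star σ * (σ * c j) + ε • c j := fun j => by
    rw [← mul_assoc, hc]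
  have hcol : ∀ i, inner A (x i) (x k) = star (σ * c i) * σ + ε • star (c i) := fun i => by
    rw [← star_inner, ← hc]
    simp only [star_add, star_mul, star_star, star_smul, star_trivial ε, mul_assoc]
  have hblock : ∀ i j, inner A (x i) (x j) =
      inner A (x i - x k <• c i) (x j - x k <• c j) + star (σ * c i) * (σ * c j)
        + ε • (star (c i) * c j) + ε • (star (c i) * c j) := fun i j => by
    rw [inner_sub_op_smul_sub_op_smul, hrow j, hcol i, ← hσ]
    simp only [star_mul, mul_add, add_mul, smul_mul_assoc, mul_smul_comm, mul_assoc]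
    abel
  have hS : gramSum B π s x f = gramSum B π s (fun i => x i - x k <• c i) f
      + ∑ i ∈ s, ∑ j ∈ s, inner B (f i) (π (star (σ * c i) * (σ * c j)) (f j))
      + ε • ∑ i ∈ s, ∑ j ∈ s, inner B (f i) (π (star (c i) * c j) (f j))
      + ε • ∑ i ∈ s, ∑ j ∈ s, inner B (f i) (π (star (c i) * c j) (f j)) := by
    simp only [gramSum, Finset.smul_sum, ← Finset.sum_add_distrib]
    refine Finset.sum_congr rfl fun i _ => Finset.sum_congr rfl fun j _ => ?_
    rw [hblock i j]
    simp only [inner_map_add, inner_map_smul]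
  rw [gramSum_insert π hk, hS, ← hσ]
  -- so that `abel` does not normalize under the binder
  generalize gramSum B π s (fun i => x i - x k <• c i) f = S'
  -- expanding the left sums first yields the double sums in the order `∑ i, ∑ j`
  simp only [inner_add_left, inner_add_right, inner_sum_left]
  simp only [inner_sum_right]
  simp only [hrow, hcol, inner_map_add, inner_map_smul, inner_map_map π hπ, hπ,
    Finset.sum_add_distrib, ← Finset.smul_sum, smul_add]
  abel

theorem gramSum_nonneg [StarOrderedRing A] [StarOrderedRing B] (s : Finset ι) (x : ι → X)
    (f : ι → F) : 0 ≤ gramSum B π s x f := by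
  classical
  induction s using Finset.induction_on generalizing x with
  | empty => simp [gramSum]
  | insert k s hk ih =>
    obtain ⟨σ, hσ⟩ := CStarAlgebra.nonneg_iff_eq_star_mul_self.mp
      (inner_self_nonneg : 0 ≤ inner A (x k) (x k))
    refine nonneg_of_forall_nonneg_add_smul (p := inner B (f k) (f k)) fun ε hε => ?_
    choose c hc using fun j =>
      exists_mul_add_smul_eq (inner_self_nonneg (x := x k)) hε (inner A (x k) (x j))
    rw [gramSum_insert_add_smul_eq π hπ hk x f hσ.symm hc]
    exact add_nonneg (add_nonneg (ih _) inner_self_nonneg)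
      (smul_nonneg hε.le (add_nonneg inner_self_nonneg inner_self_nonneg))

end GramSum

end RightCStarModule

/-- Interior tensor product of Hilbert C*-modules: if `X` is a Hilbert C*-module over `A`,
`F` a Hilbert C*-module over `B`, and `A` acts on `F` via a *-homomorphism `ρ` into the
adjointable operators, then the formula `⟨x₁ ⊗ f₁ | x₂ ⊗ f₂⟩ = ⟨f₁ | ρ(⟨x₁|x₂⟩) f₂⟩`
defines a positive-semidefinite `B`-valued inner product on the algebraic tensor product:
it is positive on finite sums of elementary tensors, right `B`-linear, and Hermitian. -/
theorem stmt_14 {A B X F : Type*}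
    [NonUnitalCStarAlgebra A] [PartialOrder A] [StarOrderedRing A]
    [NonUnitalCStarAlgebra B] [PartialOrder B] [StarOrderedRing B]
    [AddCommGroup X] [Module ℂ X] [SMul Aᵐᵒᵖ X] [Norm X] [RightCStarModule A X]
    [AddCommGroup F] [Module ℂ F] [SMul Bᵐᵒᵖ F] [Norm F] [RightCStarModule B F]
    (ρ : A → F →ₗ[ℂ] F)
    (hadd : ∀ a a' : A, ρ (a + a') = ρ a + ρ a')
    (hsmul : ∀ (c : ℂ) (a : A), ρ (c • a) = c • ρ a)
    (hmul : ∀ a a' : A, ρ (a * a') = (ρ a).comp (ρ a'))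
    (hstar : ∀ (a : A) (f₁ f₂ : F),
      (inner B (ρ a f₁) f₂) = inner B f₁ (ρ (star a) f₂))
    (hBlin : ∀ (a : A) (f : F) (b : B), ρ a (f <• b) = (ρ a f) <• b) :
    (∀ (n : ℕ) (x : Fin n → X) (f : Fin n → F),
      0 ≤ ∑ i, ∑ j, (inner B (f i) (ρ ((inner A (x i) (x j))) (f j)))) ∧
    (∀ (x₁ x₂ : X) (f₁ f₂ : F) (b : B),
      (inner B f₁ (ρ ((inner A x₁ x₂)) (f₂ <• b))) =
        (inner B f₁ (ρ ((inner A x₁ x₂)) f₂)) * b) ∧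
    (∀ (x₁ x₂ : X) (f₁ f₂ : F),
      star (inner B f₁ (ρ ((inner A x₁ x₂)) f₂)) =
        (inner B f₂ (ρ ((inner A x₂ x₁)) f₁))) := by
  let π : A →ₙₐ[ℂ] Module.End ℂ F :=
    { toFun := ρ
      map_smul' := hsmul
      map_zero' := by simpa using hsmul 0 0
      map_add' := hadd
      map_mul' := hmul }
  refine ⟨fun n x f => RightCStarModule.gramSum_nonneg π hstar Finset.univ x f, ?_, ?_⟩
  · intro x₁ x₂ f₁ f₂ b
    rw [hBlin, RightCStarModule.inner_op_smul_right]
  · intro x₁ x₂ f₁ f₂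
    rw [RightCStarModule.star_inner, hstar, RightCStarModule.star_inner]
end
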